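/- arXiv:1103.4700 — 4 statements merged into one kernel-verified Lean document; each statement's English description precedes it below -/
import Mathlib

section
/- Let m, n be positive integers with m > n, and let ε > 0. Then the limit as ε → 0 of the contour integral (1/(2πi)) ∮_{|z|=ε} (m z^{m-1})/(z^m - z̄^n) dz equals 0, and the limit of (1/(2πi)) ∮_{|z|=ε} (-n z̄^{n-1})/(z^m - z̄^n) dz̄ equals -n. -/
/-!
On `‖z‖ = ε ≤ 1/2` the reverse triangle inequality gives `‖z ^ m - z̄ ^ n‖ ≥ ε ^ n / 2`, so
`z ^ m / (z ^ m - z̄ ^ n) = O(ε ^ (m - n))` tends to `0` uniformly on the circle.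
With `z = ε e^{iθ}` we have `dz = i z dθ` and `dz̄ = -i z̄ dθ`, so the first integrand becomes
`i m z ^ m / (z ^ m - z̄ ^ n)` and the second `i n z̄ ^ n / (z ^ m - z̄ ^ n)
= i n z ^ m / (z ^ m - z̄ ^ n) - i n`. Hence the first integral tends to `0` and the second to
`-2πi n`.
-/

open Complex Filter

/-- The contour integral `∮_{|z-c|=R} f(z) dz̄`, defined analogously to `circleIntegral`
but against the conjugate differential `dz̄`. -/
noncomputable def circleIntegralConj (f : ℂ → ℂ) (c : ℂ) (R : ℝ) : ℂ :=
  ∫ θ in (0:ℝ)..(2 * Real.pi),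
    (starRingEnd ℂ) (deriv (circleMap c R) θ) * f (circleMap c R θ)

open ComplexConjugate Topology

-- The factor `k` makes this hold also at `k = 0`, where `k - 1` truncates.
lemma natCast_mul_mul_pow_sub_one {R : Type*} [CommSemiring R] (k : ℕ) (w : R) :
    (k : R) * (w * w ^ (k - 1)) = k * w ^ k := by
  cases k <;> simp [pow_succ']

lemma tendsto_integral_circleMap_zero {E : Type*} [NormedAddCommGroup E] [NormedSpace ℝ E]
    {f : ℂ → E} (hf : Tendsto f (𝓝 0) (𝓝 0)) :
    Tendsto (fun R : ℝ => ∫ θ in (0 : ℝ)..2 * Real.pi, f (circleMap 0 R θ)) (𝓝 0) (𝓝 0) := by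
  rw [Metric.tendsto_nhds] at hf ⊢
  intro e he
  obtain ⟨δ, hδ, hfδ⟩ := Metric.eventually_nhds_iff.1 (hf (e / (4 * Real.pi)) (by positivity))
  filter_upwards [Metric.ball_mem_nhds (0 : ℝ) hδ] with R hR
  have hpt : ∀ θ ∈ Set.uIoc 0 (2 * Real.pi), ‖f (circleMap 0 R θ)‖ ≤ e / (4 * Real.pi) := by
    intro θ _
    have := hfδ (y := circleMap 0 R θ) (by simpa [norm_circleMap_zero] using hR)
    rw [dist_zero_right] at this
    exact this.le
  rw [dist_zero_right]
  calc _ ≤ e / (4 * Real.pi) * |2 * Real.pi - 0| :=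
        intervalIntegral.norm_integral_le_of_norm_le_const hpt
    _ = e / 2 := by rw [sub_zero, abs_of_pos Real.two_pi_pos]; field_simp; ring
    _ < e := half_lt_self he

section

variable {m n : ℕ}

lemma pow_sub_conj_pow_ne_zero (hmn : n < m) {z : ℂ} (hz₀ : z ≠ 0) (hz₁ : ‖z‖ < 1) :
    z ^ m - conj z ^ n ≠ 0 := by
  intro h
  have h' := congrArg norm (sub_eq_zero.1 h)
  rw [norm_pow, norm_pow, RCLike.norm_conj] at h'
  exact (pow_lt_pow_right_of_lt_one₀ (norm_pos_iff.2 hz₀) hz₁ hmn).ne h'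

lemma norm_pow_div_pow_sub_conj_pow_le (hmn : n < m) {z : ℂ} (hz : ‖z‖ ≤ 1 / 2) :
    ‖z ^ m / (z ^ m - conj z ^ n)‖ ≤ 2 * ‖z‖ ^ (m - n) := by
  set r := ‖z‖
  have hsplit : r ^ m = r ^ (m - n) * r ^ n := by rw [← pow_add, Nat.sub_add_cancel hmn.le]
  have hsmall : r ^ (m - n) ≤ 1 / 2 :=
    (pow_le_of_le_one (norm_nonneg z) (by linarith) (by omega)).trans hz
  have hden : r ^ n - r ^ m ≤ ‖z ^ m - conj z ^ n‖ := by
    simpa [norm_pow, r] using norm_sub_norm_le (conj z ^ n) (z ^ m) |>.trans_eq (norm_sub_rev _ _)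
  rw [norm_div, norm_pow]
  refine div_le_of_le_mul₀ (norm_nonneg _) (by positivity) ?_
  calc r ^ m ≤ 2 * r ^ (m - n) * (r ^ n - r ^ m) := by
        rw [hsplit]
        nlinarith [mul_nonneg (mul_nonneg (pow_nonneg (norm_nonneg z) (m - n))
          (pow_nonneg (norm_nonneg z) n)) (by linarith : (0 : ℝ) ≤ 1 - 2 * r ^ (m - n))]
    _ ≤ 2 * r ^ (m - n) * ‖z ^ m - conj z ^ n‖ := by gcongr

lemma tendsto_pow_div_pow_sub_conj_pow (hmn : n < m) :
    Tendsto (fun z : ℂ => z ^ m / (z ^ m - conj z ^ n)) (𝓝 0) (𝓝 0) := by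
  have hbound : Tendsto (fun z : ℂ => 2 * ‖z‖ ^ (m - n)) (𝓝 0) (𝓝 0) := by
    simpa [Nat.sub_ne_zero_of_lt hmn] using
      ((continuous_norm.pow (m - n)).const_mul 2).tendsto (0 : ℂ)
  refine squeeze_zero_norm' ?_ hbound
  filter_upwards [Metric.closedBall_mem_nhds (0 : ℂ) (by norm_num : (0 : ℝ) < 1 / 2)] with z hz
  exact norm_pow_div_pow_sub_conj_pow_le hmn (mem_closedBall_zero_iff.1 hz)

lemma circleIntegral_natCast_mul_pow_sub_one_div (R : ℝ) :
    (∮ z in C(0, R), (m : ℂ) * z ^ (m - 1) / (z ^ m - conj z ^ n)) =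
      I * m * ∫ θ in (0 : ℝ)..2 * Real.pi,
        circleMap 0 R θ ^ m / (circleMap 0 R θ ^ m - conj (circleMap 0 R θ) ^ n) := by
  rw [circleIntegral, ← intervalIntegral.integral_const_mul]
  refine intervalIntegral.integral_congr fun θ _ => ?_
  simp only [deriv_circleMap, smul_eq_mul]
  linear_combination (I * (circleMap 0 R θ ^ m - conj (circleMap 0 R θ) ^ n)⁻¹) *
    natCast_mul_mul_pow_sub_one m (circleMap 0 R θ)

lemma conj_mul_I_mul_neg_natCast_mul_conj_pow_sub_one_div {z : ℂ}
    (hz : z ^ m - conj z ^ n ≠ 0) :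
    conj (z * I) * (-(n : ℂ) * conj z ^ (n - 1) / (z ^ m - conj z ^ n)) =
      I * n * (z ^ m / (z ^ m - conj z ^ n)) - I * n := by
  rw [map_mul, conj_I]
  linear_combination (I * (z ^ m - conj z ^ n)⁻¹) * natCast_mul_mul_pow_sub_one n (conj z) +
    (-I * n) * mul_inv_cancel₀ hz

lemma circleIntegralConj_neg_natCast_mul_conj_pow_sub_one_div (hmn : n < m) {R : ℝ}
    (hR₀ : 0 < R) (hR₁ : R < 1) :
    circleIntegralConj (fun z => -(n : ℂ) * conj z ^ (n - 1) / (z ^ m - conj z ^ n)) 0 R =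
      I * n * (∫ θ in (0 : ℝ)..2 * Real.pi,
        circleMap 0 R θ ^ m / (circleMap 0 R θ ^ m - conj (circleMap 0 R θ) ^ n)) -
        2 * Real.pi * I * n := by
  have hnorm (θ : ℝ) : ‖circleMap 0 R θ‖ = R := by rw [norm_circleMap_zero, abs_of_pos hR₀]
  have hden (θ : ℝ) : circleMap 0 R θ ^ m - conj (circleMap 0 R θ) ^ n ≠ 0 :=
    pow_sub_conj_pow_ne_zero hmn (norm_pos_iff.1 ((hnorm θ).symm ▸ hR₀)) ((hnorm θ).trans_lt hR₁)
  have hcont : Continuous fun θ =>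
      circleMap 0 R θ ^ m / (circleMap 0 R θ ^ m - conj (circleMap 0 R θ) ^ n) := by
    have := continuous_circleMap 0 R
    exact (this.pow m).div ((this.pow m).sub ((continuous_conj.comp this).pow n)) hden
  rw [circleIntegralConj, intervalIntegral.integral_congr fun θ _ => by
    rw [deriv_circleMap, conj_mul_I_mul_neg_natCast_mul_conj_pow_sub_one_div (hden θ)],
    intervalIntegral.integral_sub ((hcont.intervalIntegrable _ _).const_mul _)
      intervalIntegrable_const, intervalIntegral.integral_const_mul,
    intervalIntegral.integral_const, sub_zero, real_smul]
  push_cast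
  ring

end

theorem stmt0_general (m n : ℕ) (hmn : n < m) :
    Tendsto (fun ε : ℝ =>
        (1 / (2 * Real.pi * I)) *
          ∮ z in C(0, ε), ((m : ℂ) * z ^ (m - 1)) / (z ^ m - (starRingEnd ℂ) z ^ n))
      (nhdsWithin 0 (Set.Ioi 0)) (nhds 0) ∧
    Tendsto (fun ε : ℝ =>
        (1 / (2 * Real.pi * I)) *
          circleIntegralConj
            (fun z => (-(n : ℂ) * (starRingEnd ℂ) z ^ (n - 1)) /
              (z ^ m - (starRingEnd ℂ) z ^ n)) 0 ε)
      (nhdsWithin 0 (Set.Ioi 0)) (nhds (-(n : ℂ))) := by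
  set J := fun R : ℝ => ∫ θ in (0 : ℝ)..2 * Real.pi,
    circleMap 0 R θ ^ m / (circleMap 0 R θ ^ m - conj (circleMap 0 R θ) ^ n)
  have hJ : Tendsto J (𝓝[>] 0) (𝓝 0) :=
    (tendsto_integral_circleMap_zero (tendsto_pow_div_pow_sub_conj_pow hmn)).mono_left
      nhdsWithin_le_nhds
  have h2πI : 2 * (Real.pi : ℂ) * I ≠ 0 := by simp [Real.pi_ne_zero]
  constructor
  · simp_rw [circleIntegral_natCast_mul_pow_sub_one_div]
    simpa using (hJ.const_mul (I * m)).const_mul (1 / (2 * Real.pi * I))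
  · have hJ' := ((hJ.const_mul (I * n)).sub_const (2 * Real.pi * I * n)).const_mul
      (1 / (2 * Real.pi * I))
    rw [mul_zero, zero_sub, mul_neg, ← mul_assoc, one_div_mul_cancel h2πI, one_mul] at hJ'
    refine hJ'.congr' ?_
    filter_upwards [Ioo_mem_nhdsGT (zero_lt_one' ℝ)] with R hR
    rw [circleIntegralConj_neg_natCast_mul_conj_pow_sub_one_div hmn hR.1 hR.2]

/-- For positive integers `m > n`, as `ε → 0⁺`,
`(1/(2πi)) ∮_{|z|=ε} (m z^{m-1})/(z^m - z̄^n) dz → 0` and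
`(1/(2πi)) ∮_{|z|=ε} (-n z̄^{n-1})/(z^m - z̄^n) dz̄ → -n`. -/
theorem stmt0 (m n : ℕ) (hn : 0 < n) (hmn : n < m) :
    Tendsto (fun ε : ℝ =>
        (1 / (2 * Real.pi * I)) *
          ∮ z in C(0, ε), ((m : ℂ) * z ^ (m - 1)) / (z ^ m - (starRingEnd ℂ) z ^ n))
      (nhdsWithin 0 (Set.Ioi 0)) (nhds 0) ∧
    Tendsto (fun ε : ℝ =>
        (1 / (2 * Real.pi * I)) *
          circleIntegralConj
            (fun z => (-(n : ℂ) * (starRingEnd ℂ) z ^ (n - 1)) /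
              (z ^ m - (starRingEnd ℂ) z ^ n)) 0 ε)
      (nhdsWithin 0 (Set.Ioi 0)) (nhds (-(n : ℂ))) :=
  stmt0_general m n hmn
end

section
/- Let k ≥ 2 be an integer and 0 < a < π/2 a real number. Then for all z ∈ ℂ \ {0}, z^k · e^{az} ≠ conj(−e^{az}/z^k). That is, the equation φ(z) = conj(ψ(z)) with φ(z) = z^k e^{az} and ψ(z) = −e^{az}/z^k has no solutions in ℂ \ {0}. -/
/-!
Multiplying the equation by `conj z ^ k` turns it into `|z|^(2k) e^{az} = -e^{a conj z}`.
Since `e^{az}` and `e^{a conj z}` have the same modulus, this forces `|z| = 1`, and then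
`e^{2ia Im z} = e^{az - a conj z} = -1`, which is impossible because `|2a Im z| ≤ 2a < π`.
-/

open Complex ComplexConjugate

theorem Real.cos_ne_neg_one_of_abs_lt_pi {θ : ℝ} (hθ : |θ| < Real.pi) : Real.cos θ ≠ -1 := by
  have := Real.cos_lt_cos_of_nonneg_of_le_pi (abs_nonneg θ) le_rfl hθ
  rw [Real.cos_pi, Real.cos_abs] at this
  exact this.ne'

theorem Complex.exp_ofReal_mul_I_ne_neg_one {θ : ℝ} (hθ : |θ| < Real.pi) :
    exp (θ * I) ≠ -1 := fun h =>
  Real.cos_ne_neg_one_of_abs_lt_pi hθ <| by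
    simpa only [exp_ofReal_mul_I_re, neg_re, one_re] using congrArg re h

theorem Complex.exp_ne_neg_exp_conj {w : ℂ} (hw : |2 * w.im| < Real.pi) :
    exp w ≠ -exp (conj w) := fun h => by
  refine exp_ofReal_mul_I_ne_neg_one hw ?_
  rw [← sub_conj, exp_sub, h, neg_div, div_self (exp_ne_zero _)]

theorem Complex.eq_one_of_pow_mul_exp_eq_neg_exp_conj {r : ℝ} (hr : 0 ≤ r) {k : ℕ} (hk : k ≠ 0)
    {w : ℂ} (h : (r : ℂ) ^ k * exp w = -exp (conj w)) : r = 1 := by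
  have hnorm := congrArg norm h
  rw [norm_mul, norm_neg, norm_pow, norm_real, Real.norm_of_nonneg hr, norm_exp, norm_exp,
    conj_re, mul_left_eq_self₀] at hnorm
  exact (pow_eq_one_iff_of_nonneg hr hk).1 (hnorm.resolve_right (Real.exp_ne_zero _))

theorem Complex.pow_mul_exp_eq_conj_neg_exp_div_pow_iff {z w : ℂ} (hz : z ≠ 0) (k : ℕ) :
    z ^ k * exp w = conj (-exp w / z ^ k) ↔ (normSq z : ℂ) ^ k * exp w = -exp (conj w) := by
  rw [map_div₀, map_neg, ← exp_conj, map_pow, eq_div_iff (pow_ne_zero _ ((map_ne_zero _).2 hz)),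
    ← mul_conj, mul_pow]
  ring_nf

/-- For an integer `k ≥ 2` and a real `0 < a < π/2`, the Gauss maps
`φ(z) = z^k e^{az}` and `ψ(z) = -e^{az}/z^k` of the stationary surface `M_{k,a}`
satisfy `φ(z) ≠ conj (ψ(z))` for every `z ∈ ℂ \ {0}`. -/
theorem stmt2 (k : ℕ) (hk : 2 ≤ k) (a : ℝ) (ha : 0 < a) (ha' : a < Real.pi / 2) :
    ∀ z : ℂ, z ≠ 0 →
      z ^ k * Complex.exp ((a : ℂ) * z) ≠
        (starRingEnd ℂ) (-(Complex.exp ((a : ℂ) * z)) / z ^ k) := by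
  intro z hz h
  rw [pow_mul_exp_eq_conj_neg_exp_div_pow_iff hz] at h
  have hnormSq : normSq z = 1 :=
    eq_one_of_pow_mul_exp_eq_neg_exp_conj (normSq_nonneg z) (by omega) h
  rw [hnormSq, ofReal_one, one_pow, one_mul] at h
  refine exp_ne_neg_exp_conj ?_ h
  have him : |z.im| ≤ 1 := by
    simpa [norm_def, hnormSq] using abs_im_le_norm z
  rw [im_ofReal_mul, ← mul_assoc, abs_mul, abs_of_pos (by positivity)]
  nlinarith
end

section
/- For the surface M_{k,a} with φ = z^k e^{az}, ψ = −e^{az}/z^k, dh = e^{−az}dz (k ≥ 2, 0 < a < π/2), the limit as R → ∞ of the contour integral 2i ∮_{|z|=R} φ_z/(φ − ψ̄) dz equals −4πk, and the limit as r → 0 of 2i ∮_{|z|=r} φ_z/(φ − ψ̄) dz equals 0, where φ_z/(φ − ψ̄) = (a + k/z)/(1 + e^{a(z̄−z)}/|z|^{2k}). -/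
/-!
On the circle `|z| = R` the exponent `a (z̄ - z)` is purely imaginary, so the denominator is
`1 + ε` with `|ε| = R^{-2k}` exactly. For large `R` the integrand is `a + k/z + O(R^{-2k})`, and
`∮ (a + k/z) dz = 2πik`. For small `r` it is `O((|a| + k/r) r^{2k})`, which is killed by the length
`2πr` of the circle.
-/

open Complex Filter Metric Topology

theorem circleIntegrable_const_div (b : ℂ) {R : ℝ} (hR : R ≠ 0) :
    CircleIntegrable (fun z ↦ b / z) 0 R :=
  ContinuousOn.circleIntegrable' <| continuousOn_const.div continuousOn_id fun _ hz ↦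
    ne_of_mem_sphere hz (abs_pos.2 hR).ne'

namespace circleIntegral

theorem tendsto_zero_of_norm_le_div_radius {f : ℂ → ℂ} {c : ℂ} {l : Filter ℝ} {M : ℝ → ℝ}
    (hf : ∀ᶠ R in l, 0 < R ∧ ∀ z ∈ sphere c R, ‖f z‖ ≤ M R / R) (hM : Tendsto M l (𝓝 0)) :
    Tendsto (fun R ↦ ∮ z in C(c, R), f z) l (𝓝 0) := by
  refine squeeze_zero_norm' ?_ (by simpa using hM.const_mul (2 * Real.pi))
  filter_upwards [hf] with R ⟨hR, hbound⟩
  calc ‖∮ z in C(c, R), f z‖ ≤ 2 * Real.pi * R * (M R / R) :=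
        norm_integral_le_of_norm_le_const hR.le hbound
    _ = 2 * Real.pi * M R := by field_simp

theorem integral_const_add_const_div (a b : ℂ) {R : ℝ} (hR : R ≠ 0) :
    (∮ z in C(0, R), (a + b / z)) = 2 * Real.pi * I * b := by
  have hconst : (∮ _ in C(0, R), a) = 0 :=
    integral_eq_zero_of_hasDerivWithinAt' fun z _ ↦ (hasDerivAt_mul_const a).hasDerivWithinAt
  rw [integral_add (circleIntegrable_const a 0 R) (circleIntegrable_const_div b hR), hconst,
    zero_add]
  simpa [div_eq_mul_inv, mul_comm] using congrArg (b * ·) (integral_sub_center_inv 0 hR)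

end circleIntegral

theorem norm_div_one_add_sub_self_le {w ε : ℂ} (hε : ‖ε‖ ≤ 1 / 2) :
    ‖w / (1 + ε) - w‖ ≤ 2 * ‖w‖ * ‖ε‖ := by
  have hden : 1 / 2 ≤ ‖1 + ε‖ := by
    have := norm_sub_norm_le (1 : ℂ) (-ε)
    rw [norm_one, norm_neg, sub_neg_eq_add] at this
    linarith
  have hne : 1 + ε ≠ 0 := norm_pos_iff.1 (by linarith)
  rw [div_sub' hne, norm_div, show w - (1 + ε) * w = -(w * ε) by ring, norm_neg, norm_mul,
    div_le_iff₀ (by linarith)]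
  nlinarith [mul_nonneg (norm_nonneg w) (norm_nonneg ε)]

theorem norm_div_one_add_le {w ε : ℂ} (hε : 2 ≤ ‖ε‖) : ‖w / (1 + ε)‖ ≤ 2 * ‖w‖ / ‖ε‖ := by
  have hden : ‖ε‖ / 2 ≤ ‖1 + ε‖ := by
    have := norm_sub_norm_le ε (-1)
    rw [norm_neg, norm_one, sub_neg_eq_add, add_comm] at this
    linarith
  rw [norm_div, div_le_div_iff₀ (by linarith) (by linarith)]
  nlinarith [norm_nonneg w]

theorem norm_ofReal_add_natCast_div_le (a : ℝ) (k : ℕ) (z : ℂ) :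
    ‖(a : ℂ) + k / z‖ ≤ |a| + k / ‖z‖ := by
  simpa [norm_div] using norm_add_le (a : ℂ) (k / z)

section ConjRatio

variable (a : ℝ) (k : ℕ)

/-- `-ψ̄ / φ` for `φ = z^k e^{az}` and `ψ = -e^{az} / z^k`, so that
`φ_z / (φ - ψ̄) = (a + k / z) / (1 + conjRatio a k z)`. -/
noncomputable def conjRatio (z : ℂ) : ℂ :=
  exp (a * (starRingEnd ℂ z - z)) / ((‖z‖ : ℂ) ^ (2 * k))

variable {a k}

theorem norm_conjRatio (z : ℂ) : ‖conjRatio a k z‖ = (‖z‖ ^ (2 * k))⁻¹ := by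
  have hre : ((a : ℂ) * (starRingEnd ℂ z - z)).re = 0 := by
    simp [mul_re, sub_re, sub_im]
  rw [conjRatio, norm_div, norm_exp, hre, Real.exp_zero, norm_pow, norm_real, norm_norm, one_div]

theorem norm_conjRatio_le (hk : k ≠ 0) {z : ℂ} (hz : 1 ≤ ‖z‖) :
    ‖conjRatio a k z‖ ≤ (‖z‖ ^ 2)⁻¹ := by
  rw [norm_conjRatio]
  exact inv_anti₀ (by positivity) (pow_le_pow_right₀ hz (by omega))

theorem inv_norm_sq_le_norm_conjRatio (hk : k ≠ 0) {z : ℂ} (hz : ‖z‖ ≤ 1) :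
    (‖z‖ ^ 2)⁻¹ ≤ ‖conjRatio a k z‖ := by
  rw [norm_conjRatio]
  rcases eq_or_ne z 0 with rfl | hz₀
  · simp
  exact inv_anti₀ (by positivity) (pow_le_pow_of_le_one (norm_nonneg z) hz (by omega))

theorem continuousOn_conjRatio : ContinuousOn (conjRatio a k) {0}ᶜ := by
  refine Continuous.continuousOn ?_ |>.div (Continuous.continuousOn ?_) fun z hz ↦ ?_
  · exact continuous_exp.comp (continuous_const.mul (continuous_conj.sub continuous_id))
  · exact (continuous_ofReal.comp continuous_norm).pow _
  · exact pow_ne_zero _ (ofReal_ne_zero.2 (norm_ne_zero_iff.2 hz))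

theorem one_add_conjRatio_ne_zero (hk : k ≠ 0) {z : ℂ} (hz : ‖z‖ ≠ 1) :
    1 + conjRatio a k z ≠ 0 := by
  intro h
  have : ‖conjRatio a k z‖ = 1 := by rw [eq_neg_of_add_eq_zero_right h, norm_neg, norm_one]
  rw [norm_conjRatio, inv_eq_one, pow_eq_one_iff_of_nonneg (norm_nonneg z) (by omega)] at this
  exact hz this

theorem circleIntegrable_div_one_add_conjRatio (hk : k ≠ 0) {R : ℝ} (hR : 0 < R) (hR1 : R ≠ 1) :
    CircleIntegrable (fun z ↦ ((a : ℂ) + k / z) / (1 + conjRatio a k z)) 0 R := by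
  have hz : ∀ z ∈ sphere (0 : ℂ) R, z ≠ 0 := fun z hz ↦ ne_of_mem_sphere hz hR.ne'
  refine ContinuousOn.circleIntegrable hR.le (ContinuousOn.div ?_ ?_ fun z hz' ↦ ?_)
  · exact continuousOn_const.add (continuousOn_const.div continuousOn_id hz)
  · exact continuousOn_const.add (continuousOn_conjRatio.mono fun z hz' ↦ hz z hz')
  · exact one_add_conjRatio_ne_zero hk (by rwa [mem_sphere_zero_iff_norm.1 hz'])

theorem tendsto_circleIntegral_div_one_add_conjRatio_atTop (hk : k ≠ 0) :
    Tendsto (fun R : ℝ ↦ ∮ z in C(0, R), ((a : ℂ) + k / z) / (1 + conjRatio a k z)) atTop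
      (𝓝 (2 * Real.pi * I * k)) := by
  set g : ℂ → ℂ := fun z ↦ a + k / z
  have hclose : ∀ᶠ R in atTop, 0 < R ∧ ∀ z ∈ sphere (0 : ℂ) R,
      ‖g z / (1 + conjRatio a k z) - g z‖ ≤ 2 * (|a| + k) / R / R := by
    filter_upwards [eventually_ge_atTop 2] with R hR
    refine ⟨by linarith, fun z hz ↦ ?_⟩
    rw [mem_sphere_zero_iff_norm] at hz
    have hε : ‖conjRatio a k z‖ ≤ (R ^ 2)⁻¹ := hz ▸ norm_conjRatio_le (by omega) (by linarith)
    have hg : ‖g z‖ ≤ |a| + k := by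
      grw [norm_ofReal_add_natCast_div_le, hz, div_le_self (Nat.cast_nonneg k) (by linarith)]
    calc _ ≤ 2 * ‖g z‖ * ‖conjRatio a k z‖ :=
          norm_div_one_add_sub_self_le (hε.trans (by rw [inv_le_comm₀] <;> nlinarith))
      _ ≤ 2 * (|a| + k) * (R ^ 2)⁻¹ := by gcongr
      _ = 2 * (|a| + k) / R / R := by field_simp
  have hsplit : ∀ᶠ R in atTop, (∮ z in C(0, R), g z / (1 + conjRatio a k z)) =
      (∮ z in C(0, R), (g z / (1 + conjRatio a k z) - g z)) + 2 * Real.pi * I * k := by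
    filter_upwards [eventually_gt_atTop 1] with R hR
    have hR₀ : R ≠ 0 := by positivity
    have hg : CircleIntegrable g 0 R :=
      (circleIntegrable_const _ 0 R).add (circleIntegrable_const_div _ hR₀)
    rw [circleIntegral.integral_sub (circleIntegrable_div_one_add_conjRatio hk (by linarith) hR.ne')
      hg, circleIntegral.integral_const_add_const_div _ _ hR₀]
    ring
  refine Tendsto.congr' (EventuallyEq.symm hsplit) ?_
  simpa using (circleIntegral.tendsto_zero_of_norm_le_div_radius hclose
    (tendsto_const_nhds.div_atTop tendsto_id)).add_const (2 * Real.pi * I * k)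

theorem tendsto_circleIntegral_div_one_add_conjRatio_nhdsGT_zero (hk : k ≠ 0) :
    Tendsto (fun r : ℝ ↦ ∮ z in C(0, r), ((a : ℂ) + k / z) / (1 + conjRatio a k z)) (𝓝[>] 0)
      (𝓝 0) := by
  refine circleIntegral.tendsto_zero_of_norm_le_div_radius
    (M := fun r ↦ 2 * (|a| + k) * r ^ 2) ?_ ?_
  · filter_upwards [Ioo_mem_nhdsGT (by norm_num : (0 : ℝ) < 1 / 2)] with r ⟨hr0, hr⟩
    refine ⟨hr0, fun z hz ↦ ?_⟩
    rw [mem_sphere_zero_iff_norm] at hz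
    have hε : (r ^ 2)⁻¹ ≤ ‖conjRatio a k z‖ :=
      hz ▸ inv_norm_sq_le_norm_conjRatio (by omega) (by linarith)
    have hg : ‖(a : ℂ) + k / z‖ ≤ (|a| + k) / r := by
      grw [norm_ofReal_add_natCast_div_le, hz]
      rw [add_div]
      gcongr
      exact le_div_self (abs_nonneg a) hr0 (by linarith)
    calc _ ≤ 2 * ‖(a : ℂ) + k / z‖ / ‖conjRatio a k z‖ :=
          norm_div_one_add_le (le_trans (by rw [le_inv_comm₀] <;> nlinarith) hε)
      _ ≤ 2 * ((|a| + k) / r) / (r ^ 2)⁻¹ := by gcongr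
      _ = 2 * (|a| + k) * r ^ 2 / r := by field_simp
  · have hM : Continuous fun r : ℝ ↦ 2 * (|a| + k) * r ^ 2 := by fun_prop
    exact (hM.tendsto' 0 0 (by simp)).mono_left nhdsWithin_le_nhds

end ConjRatio

theorem stmt5_general (k : ℕ) (hk : 2 ≤ k) (a : ℝ) :
    Tendsto (fun R : ℝ =>
        2 * I * ∮ z in C(0, R),
          ((a : ℂ) + (k : ℂ) / z) /
            (1 + Complex.exp ((a : ℂ) * ((starRingEnd ℂ) z - z)) /
              (((‖z‖ : ℝ) : ℂ) ^ (2 * k))))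
      atTop (nhds (-(4 * Real.pi * k : ℝ) : ℂ)) ∧
    Tendsto (fun r : ℝ =>
        2 * I * ∮ z in C(0, r),
          ((a : ℂ) + (k : ℂ) / z) /
            (1 + Complex.exp ((a : ℂ) * ((starRingEnd ℂ) z - z)) /
              (((‖z‖ : ℝ) : ℂ) ^ (2 * k))))
      (nhdsWithin 0 (Set.Ioi 0)) (nhds 0) := by
  have hk₀ : k ≠ 0 := by omega
  constructor
  · have hlim : 2 * I * (2 * Real.pi * I * k) = -((4 * Real.pi * k : ℝ) : ℂ) := by
      push_cast
      linear_combination (4 * Real.pi * k : ℂ) * I_sq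
    rw [← hlim]
    exact (tendsto_circleIntegral_div_one_add_conjRatio_atTop hk₀).const_mul (2 * I)
  · have h := (tendsto_circleIntegral_div_one_add_conjRatio_nhdsGT_zero (a := a) hk₀).const_mul
      (2 * I)
    rwa [mul_zero] at h

/-- For `M_{k,a}` with `φ = z^k e^{az}`, `ψ = -e^{az}/z^k` (`k ≥ 2`, `0 < a < π/2`),
where `φ_z/(φ - ψ̄) = (a + k/z)/(1 + e^{a(z̄-z)}/|z|^{2k})`, one has
`2i ∮_{|z|=R} φ_z/(φ-ψ̄) dz → -4πk` as `R → ∞` and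
`2i ∮_{|z|=r} φ_z/(φ-ψ̄) dz → 0` as `r → 0⁺`. -/
theorem stmt5 (k : ℕ) (hk : 2 ≤ k) (a : ℝ) (ha : 0 < a) (ha' : a < Real.pi / 2) :
    Tendsto (fun R : ℝ =>
        2 * I * ∮ z in C(0, R),
          ((a : ℂ) + (k : ℂ) / z) /
            (1 + Complex.exp ((a : ℂ) * ((starRingEnd ℂ) z - z)) /
              (((‖z‖ : ℝ) : ℂ) ^ (2 * k))))
      atTop (nhds (-(4 * Real.pi * k : ℝ) : ℂ)) ∧
    Tendsto (fun r : ℝ =>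
        2 * I * ∮ z in C(0, r),
          ((a : ℂ) + (k : ℂ) / z) /
            (1 + Complex.exp ((a : ℂ) * ((starRingEnd ℂ) z - z)) /
              (((‖z‖ : ℝ) : ℂ) ^ (2 * k))))
      (nhdsWithin 0 (Set.Ioi 0)) (nhds 0) :=
  stmt5_general k hk a
end

section
/- Let φ(z) = z + t and ψ(z) = c/(z − t) with real parameters t and c ≠ 0. Then the equation φ(z) = conj(ψ(z)), equivalently z z̄ + t(z̄ − z) − c − t² = 0, has no solution z ∈ ℂ \ {t} if and only if c < −t². -/
open Complex

/-- For real `t` and real `c ≠ 0`, the equation `φ(z) = conj (ψ(z))` with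
`φ(z) = z + t`, `ψ(z) = c/(z - t)` has no solution `z ∈ ℂ \ {t}` iff `c < -t²`. -/
theorem stmt7 (t c : ℝ) (hc : c ≠ 0) :
    (∀ z : ℂ, z ≠ (t : ℂ) →
        z + (t : ℂ) ≠ (starRingEnd ℂ) ((c : ℂ) / (z - (t : ℂ)))) ↔ c < -t ^ 2 := by
  constructor
  · intro h
    by_contra hlt
    push_neg at hlt
    have hct : 0 ≤ c + t ^ 2 := by linarith
    set r : ℝ := Real.sqrt (c + t ^ 2) with hr
    have hr2 : r ^ 2 = c + t ^ 2 := Real.sq_sqrt hct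
    have hrt : r ≠ t := by
      intro he
      apply hc
      have : r ^ 2 = t ^ 2 := by rw [he]
      linarith [hr2]
    have hz : (r : ℂ) ≠ (t : ℂ) := by
      exact_mod_cast fun he => hrt (Complex.ofReal_inj.mp he)
    apply h (r : ℂ) hz
    have hsub : (r : ℂ) - (t : ℂ) ≠ 0 := sub_ne_zero.mpr hz
    rw [map_div₀]
    rw [Complex.conj_ofReal]
    rw [show (starRingEnd ℂ) ((r : ℂ) - (t : ℂ)) = (r : ℂ) - (t : ℂ) by
      simp [Complex.ext_iff]]
    field_simp
    have : ((r : ℂ) + t) * ((r : ℂ) - t) = (r : ℂ) ^ 2 - (t : ℂ) ^ 2 := by ring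
    rw [this]
    have : ((r : ℝ) ^ 2 - t ^ 2 : ℝ) = c := by linarith [hr2]
    push_cast [← this]
    ring
  · intro hlt z hz heq
    have hsub : z - (t : ℂ) ≠ 0 := sub_ne_zero.mpr hz
    have hcsub : (starRingEnd ℂ) (z - (t : ℂ)) ≠ 0 :=
      (map_ne_zero (starRingEnd ℂ)).mpr hsub
    have hmul : (z + (t : ℂ)) * (starRingEnd ℂ) (z - (t : ℂ)) = (c : ℂ) := by
      rw [heq, map_div₀, Complex.conj_ofReal]
      exact div_mul_cancel₀ _ hcsub
    have hre := congrArg Complex.re hmul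
    simp [Complex.mul_re, Complex.add_re, Complex.sub_re, Complex.add_im,
      Complex.sub_im] at hre
    nlinarith [sq_nonneg z.re, sq_nonneg z.im, hre]
end
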